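/- arXiv:1601.06453 — 2 statements merged into one kernel-verified Lean document; each statement's English description precedes it below -/
import Mathlib

section
/- Let q ∈ (0,1), λ ∈ (0,1), let G be a geometric random variable with parameter λ, and define β := E[ (1/(1+q))·h((1-(-q)^{G+1})/(1+q)) + (q/(1+q))·h((1-(-q)^G)/(1+q)) ]. Then β ≥ (1 - 2·E[q^G]/(1+q))·h(1/(1+q)) + (E[q^G]/(1+q))·h((1-q)/(1+q)), where E[q^G] = λq/(1-(1-λ)q). -/
open Real Filter MeasureTheory

/-- Binary entropy function (base-2 logarithm), with `binEnt 0 = binEnt 1 = 0`. -/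
noncomputable def binEnt (p : ℝ) : ℝ :=
  -p * Real.logb 2 p - (1 - p) * Real.logb 2 (1 - p)

/-- Inverse of the binary entropy function, mapping `[0,1]` onto `[0,1/2]`. -/
noncomputable def binEntInv (y : ℝ) : ℝ :=
  sInf {p : ℝ | p ∈ Set.Icc (0:ℝ) (1/2) ∧ y ≤ binEnt p}

/-- Binary convolution `a*b := a(1-b) + b(1-a)`. -/
def bConv (a b : ℝ) : ℝ := a * (1 - b) + b * (1 - a)

/-- Shannon entropy (in bits) of a distribution on a finite type. -/
noncomputable def entropyDist {β : Type*} [Fintype β] (p : β → ℝ) : ℝ :=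
  ∑ b, -(p b * Real.logb 2 (p b))

/-- Probability of the path `x` under the stationary symmetric binary Markov process with
transition probability `q`: the first coordinate is uniform (`Bernoulli(1/2)`) and each
subsequent coordinate flips the previous one with probability `q`. -/
noncomputable def symPathProb (q : ℝ) (n : ℕ) (x : Fin n → Bool) : ℝ :=
  ∏ i : Fin n,
    if (i : ℕ) = 0 then (1/2 : ℝ)
    else if x ⟨(i : ℕ) - 1, Nat.lt_of_le_of_lt (Nat.sub_le _ _) i.isLt⟩ = x i then 1 - q else q

/-- Output distribution of a memoryless binary symmetric channel with crossover probability `a`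
applied to an input with distribution `p` (each coordinate flipped independently w.p. `a`). -/
noncomputable def bscOutput {n : ℕ} (a : ℝ) (p : (Fin n → Bool) → ℝ) : (Fin n → Bool) → ℝ :=
  fun y => ∑ x : Fin n → Bool, p x * ∏ i, (if y i = x i then 1 - a else a)

/-- Distribution of the projection onto the coordinates in `s` of a vector with distribution `p`. -/
noncomputable def projDist {n : ℕ} (p : (Fin n → Bool) → ℝ) (s : Finset (Fin n)) :
    ({ i // i ∈ s } → Bool) → ℝ :=
  fun y => ∑ x : Fin n → Bool, if (∀ i : { i // i ∈ s }, x i.val = y i) then p x else 0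

/-- `H(X_S | S) = ∑_{s ⊆ [n]} P(S = s) H(X_s)`, where the random subset `S` contains each
element of `[n]` independently with probability `lam`. -/
noncomputable def condEntProj {n : ℕ} (lam : ℝ) (p : (Fin n → Bool) → ℝ) : ℝ :=
  ∑ s : Finset (Fin n), lam ^ s.card * (1 - lam) ^ (n - s.card) * entropyDist (projDist p s)

/-- Transition kernel of a binary Markov chain: `P(b | a)` with off-diagonal entries
`q01 = P(1|0)` and `q10 = P(0|1)`. -/
def markovTrans (q01 q10 : ℝ) (a b : Bool) : ℝ :=
  if a then (if b then 1 - q10 else q10) else (if b then q01 else 1 - q01)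

/-- Probability of the path `x` under the binary Markov chain with initial distribution
`(p0, p1)` and transition probabilities `q01, q10`. -/
noncomputable def markovPathProb (p0 p1 q01 q10 : ℝ) (n : ℕ) (x : Fin n → Bool) : ℝ :=
  ∏ i : Fin n,
    if (i : ℕ) = 0 then (if x i then p1 else p0)
    else markovTrans q01 q10 (x ⟨(i : ℕ) - 1, Nat.lt_of_le_of_lt (Nat.sub_le _ _) i.isLt⟩) (x i)

lemma binEnt_eq (p : ℝ) : binEnt p = Real.binEntropy p / Real.log 2 := by
  simp [binEnt, Real.binEntropy, Real.logb, Real.log_inv]; ring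

lemma binEnt_nonneg {p : ℝ} (h0 : 0 ≤ p) (h1 : p ≤ 1) : 0 ≤ binEnt p := by
  rw [binEnt_eq]
  exact div_nonneg (Real.binEntropy_nonneg h0 h1) (Real.log_nonneg (by norm_num))

lemma binEnt_le_one (p : ℝ) : binEnt p ≤ 1 := by
  rw [binEnt_eq, div_le_one (Real.log_pos (by norm_num))]
  exact Real.binEntropy_le_log_two

@[simp] lemma binEnt_one' : binEnt 1 = 0 := by simp [binEnt]

lemma binEnt_combo {a b t : ℝ} (ha : a ∈ Set.Icc (0:ℝ) 1) (hb : b ∈ Set.Icc (0:ℝ) 1)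
    (ht0 : 0 ≤ t) (ht1 : t ≤ 1) :
    (1 - t) * binEnt a + t * binEnt b ≤ binEnt ((1 - t) * a + t * b) := by
  have h := Real.strictConcave_binEntropy.concaveOn.2 ha hb
      (show (0:ℝ) ≤ 1 - t by linarith) ht0 (show (1-t) + t = 1 by ring)
  simp only [smul_eq_mul] at h
  have hlog : 0 < Real.log 2 := Real.log_pos (by norm_num)
  simp only [binEnt_eq]
  rw [show (1-t) * (Real.binEntropy a / Real.log 2) + t * (Real.binEntropy b / Real.log 2)
      = ((1-t) * Real.binEntropy a + t * Real.binEntropy b) / Real.log 2 by ring]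
  gcongr

section bounds
variable {q : ℝ} (hq0 : 0 < q) (hq1 : q < 1)
include hq0 hq1

lemma boundA (j : ℕ) :
    (1 - q^j) * binEnt (1/(1+q)) ≤ binEnt ((1 + q^(j+1))/(1+q)) := by
  have hpq : (0:ℝ) < 1 + q := by linarith
  have hqj0 : 0 ≤ q^j := by positivity
  have hqj1 : q^j ≤ 1 := pow_le_one₀ hq0.le hq1.le
  have h := binEnt_combo (a := 1/(1+q)) (b := 1) (t := q^j)
    (Set.mem_Icc.2 ⟨by positivity, by rw [div_le_one hpq]; linarith⟩)
    (Set.mem_Icc.2 ⟨zero_le_one, le_refl 1⟩) hqj0 hqj1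
  calc (1 - q^j) * binEnt (1/(1+q))
      = (1 - q^j) * binEnt (1/(1+q)) + q^j * binEnt 1 := by simp
    _ ≤ binEnt ((1 - q^j) * (1/(1+q)) + q^j * 1) := h
    _ = binEnt ((1 + q^(j+1))/(1+q)) := by
        congr 1; field_simp; ring

lemma boundB (j : ℕ) :
    (1 - q^j) * binEnt (1/(1+q)) + q^j * binEnt ((1-q)/(1+q))
      ≤ binEnt ((1 - q^(j+1))/(1+q)) := by
  have hpq : (0:ℝ) < 1 + q := by linarith
  have hqj0 : 0 ≤ q^j := by positivity
  have hqj1 : q^j ≤ 1 := pow_le_one₀ hq0.le hq1.le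
  have h := binEnt_combo (a := 1/(1+q)) (b := (1-q)/(1+q)) (t := q^j)
    (Set.mem_Icc.2 ⟨by positivity, by rw [div_le_one hpq]; linarith⟩)
    (Set.mem_Icc.2 ⟨div_nonneg (by linarith) hpq.le, by rw [div_le_one hpq]; linarith⟩) hqj0 hqj1
  calc (1 - q^j) * binEnt (1/(1+q)) + q^j * binEnt ((1-q)/(1+q))
      ≤ binEnt ((1 - q^j) * (1/(1+q)) + q^j * ((1-q)/(1+q))) := h
    _ = binEnt ((1 - q^(j+1))/(1+q)) := by
        congr 1; field_simp; ring

end bounds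

/-- For `q ∈ (0,1)`, `λ ∈ (0,1)` and `G` geometric with parameter `λ`,
with `β := E[(1/(1+q))·h((1-(-q)^{G+1})/(1+q)) + (q/(1+q))·h((1-(-q)^G)/(1+q))]`:
`β ≥ (1 - 2·E[q^G]/(1+q))·h(1/(1+q)) + (E[q^G]/(1+q))·h((1-q)/(1+q))`,
where `E[q^G] = λq/(1-(1-λ)q)`. -/
theorem rll_beta_lower_bound (q lam : ℝ)
    (hq : q ∈ Set.Ioo (0:ℝ) 1) (hlam : lam ∈ Set.Ioo (0:ℝ) 1) :
    (∑' g : ℕ, (1 - lam)^g * lam * q^(g+1)) = lam * q / (1 - (1 - lam) * q)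
    ∧ (∑' g : ℕ, (1 - lam)^g * lam *
        ((1/(1+q)) * binEnt ((1 - (-q)^(g+2))/(1+q))
          + (q/(1+q)) * binEnt ((1 - (-q)^(g+1))/(1+q))))
      ≥ (1 - 2 * (lam * q / (1 - (1 - lam) * q)) / (1+q)) * binEnt (1/(1+q))
        + (lam * q / (1 - (1 - lam) * q)) / (1+q) * binEnt ((1-q)/(1+q)) := by
  obtain ⟨hq0, hq1⟩ := hq
  obtain ⟨hl0, hl1⟩ := hlam
  have hpq : (0:ℝ) < 1 + q := by linarith
  have hr0 : 0 ≤ (1 - lam) * q := by nlinarith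
  have hr1 : (1 - lam) * q < 1 := by nlinarith
  have hden : (0:ℝ) < 1 - (1 - lam) * q := by linarith
  have hl0' : 0 ≤ 1 - lam := by linarith
  have hl1' : 1 - lam < 1 := by linarith
  -- Part 1
  have part1 : (∑' g : ℕ, (1 - lam)^g * lam * q^(g+1)) = lam * q / (1 - (1 - lam) * q) := by
    have : ∀ g : ℕ, (1 - lam)^g * lam * q^(g+1) = ((1-lam)*q)^g * (lam * q) := by
      intro g; rw [mul_pow, pow_succ]; ring
    rw [tsum_congr this, tsum_mul_right, tsum_geometric_of_lt_one hr0 hr1]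
    rw [inv_mul_eq_div]
  refine ⟨part1, ?_⟩
  set H := binEnt (1/(1+q)) with hH
  set H' := binEnt ((1-q)/(1+q)) with hH'
  set f : ℕ → ℝ := fun g => (1 - lam)^g * lam *
        ((1/(1+q)) * binEnt ((1 - (-q)^(g+2))/(1+q))
          + (q/(1+q)) * binEnt ((1 - (-q)^(g+1))/(1+q))) with hf
  set r : ℕ → ℝ := fun g => (1-lam)^g * (lam * H)
      + ((1-lam)*q)^g * (lam * q / (1+q) * (H' - 2*H)) with hr
  -- pointwise bound
  have key : ∀ g : ℕ, r g ≤ f g := by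
    intro g
    have hrfg : r g = (1-lam)^g * lam *
        ((1 - 2*q^(g+1)/(1+q)) * H + q^(g+1)/(1+q) * H') := by
      simp only [hr, mul_pow, pow_succ]
      field_simp
      ring
    rw [hrfg, hf]
    apply mul_le_mul_of_nonneg_left _ (by positivity)
    rcases Nat.even_or_odd g with he | ho
    · -- g even: g+2 even, g+1 odd
      have e2 : (-q)^(g+2) = q^(g+2) := (he.add even_two).neg_pow q
      have e1 : (-q)^(g+1) = -(q^(g+1)) := (Even.add_one he).neg_pow q
      rw [e1, e2, sub_neg_eq_add]
      have hA := boundA hq0 hq1 g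
      have hB := boundB hq0 hq1 (g+1)
      have h3 : (1 - 2*q^(g+1)/(1+q)) * H + q^(g+1)/(1+q) * H'
          = (1/(1+q)) * ((1 - q^(g+1)) * H + q^(g+1) * H')
            + (q/(1+q)) * ((1 - q^g) * H) := by
        field_simp; ring
      rw [h3]
      exact add_le_add (mul_le_mul_of_nonneg_left hB (by positivity))
        (mul_le_mul_of_nonneg_left hA (by positivity))
    · -- g odd: g+2 odd, g+1 even
      have e2 : (-q)^(g+2) = -(q^(g+2)) := (ho.add_even even_two).neg_pow q
      have e1 : (-q)^(g+1) = q^(g+1) := (Odd.add_one ho).neg_pow q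
      rw [e1, e2, sub_neg_eq_add]
      have hA := boundA hq0 hq1 (g+1)
      have hB := boundB hq0 hq1 g
      have h3 : (1 - 2*q^(g+1)/(1+q)) * H + q^(g+1)/(1+q) * H'
          = (1/(1+q)) * ((1 - q^(g+1)) * H)
            + (q/(1+q)) * ((1 - q^g) * H + q^g * H') := by
        field_simp; ring
      rw [h3]
      exact add_le_add (mul_le_mul_of_nonneg_left hA (by positivity))
        (mul_le_mul_of_nonneg_left hB (by positivity))
  -- summability
  have hs1 : Summable (fun g : ℕ => (1-lam)^g * (lam * H)) :=
    (summable_geometric_of_lt_one hl0' hl1').mul_right _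
  have hs2 : Summable (fun g : ℕ => ((1-lam)*q)^g * (lam * q / (1+q) * (H' - 2*H))) :=
    (summable_geometric_of_lt_one hr0 hr1).mul_right _
  have hsr : Summable r := hs1.add hs2
  have hargmem : ∀ m : ℕ, 1 ≤ m → (1 - (-q)^m)/(1+q) ∈ Set.Icc (0:ℝ) 1 := by
    intro m hm
    have h1 : |(-q)^m| ≤ q := by
      rw [abs_pow, abs_neg, abs_of_pos hq0]
      calc q^m ≤ q^1 := pow_le_pow_of_le_one hq0.le hq1.le hm
        _ = q := pow_one q
    have h2 : -q ≤ (-q)^m := (abs_le.1 h1).1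
    have h3 : (-q)^m ≤ q := (abs_le.1 h1).2
    constructor
    · apply div_nonneg _ hpq.le; linarith
    · rw [div_le_one hpq]; linarith
  have hfnn : ∀ g : ℕ, 0 ≤ f g := by
    intro g
    apply mul_nonneg (by positivity)
    have m2 := hargmem (g+2) (by omega)
    have m1 := hargmem (g+1) (by omega)
    apply add_nonneg
    · exact mul_nonneg (by positivity) (binEnt_nonneg m2.1 m2.2)
    · exact mul_nonneg (by positivity) (binEnt_nonneg m1.1 m1.2)
  have hfle : ∀ g : ℕ, f g ≤ (1-lam)^g * lam := by
    intro g
    have : (1/(1+q)) * binEnt ((1 - (-q)^(g+2))/(1+q))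
          + (q/(1+q)) * binEnt ((1 - (-q)^(g+1))/(1+q))
        ≤ (1/(1+q)) * 1 + (q/(1+q)) * 1 := by
      exact add_le_add (mul_le_mul_of_nonneg_left (binEnt_le_one _) (by positivity))
        (mul_le_mul_of_nonneg_left (binEnt_le_one _) (by positivity))
    have h2 : (1/(1+q)) * 1 + (q/(1+q)) * 1 = 1 := by field_simp
    calc f g ≤ (1-lam)^g * lam * ((1/(1+q)) * 1 + (q/(1+q)) * 1) :=
          mul_le_mul_of_nonneg_left this (by positivity)
      _ = (1-lam)^g * lam * 1 := by rw [h2]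
      _ = (1-lam)^g * lam := by ring
  have hsf : Summable f :=
    Summable.of_nonneg_of_le hfnn hfle ((summable_geometric_of_lt_one hl0' hl1').mul_right _)
  -- compute tsum r
  have htr : ∑' g, r g = (1 - 2 * (lam * q / (1 - (1 - lam) * q)) / (1+q)) * H
        + (lam * q / (1 - (1 - lam) * q)) / (1+q) * H' := by
    rw [hr, Summable.tsum_add hs1 hs2, tsum_mul_right, tsum_mul_right,
      tsum_geometric_of_lt_one hl0' hl1', tsum_geometric_of_lt_one hr0 hr1]
    have h1 : (1 - (1-lam))⁻¹ = lam⁻¹ := by ring_nf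
    rw [h1]
    field_simp
    ring
  calc (1 - 2 * (lam * q / (1 - (1 - lam) * q)) / (1+q)) * H
        + (lam * q / (1 - (1 - lam) * q)) / (1+q) * H'
      = ∑' g, r g := htr.symm
    _ ≤ ∑' g, f g := Summable.tsum_le_tsum key hsr hsf
end

section
/- For every fixed α ∈ (0,1/2), the function φ: [0,1] → [0,1] defined by φ(t) = h(α * h⁻¹(t)) is convex on [0,1], where a*b := a(1-b)+b(1-a). -/
open Real Filter MeasureTheory

/-!
Write `x = h⁻¹(t)` and `y = α * x = α + (1 - 2α) x`. Up to the factor `log 2`, the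
derivative of `h` is `L p = log (1 - p) - log p`, so the chain rule gives
`φ'(t) = (1 - 2α) L(y) / L(x)`. As `h⁻¹` is increasing, convexity of `φ` reduces to
monotonicity of `x ↦ (1 - 2α) L(y) / L(x)` on `(0, 1/2)`, and since `L' p = -1 / (p (1 - p))`
this amounts to `(1 - 2α) G(x) ≤ G(y)` for `G p = p (1 - p) L(p)`. That holds because `G` is
concave on `(0, 1/2]`, vanishes at `1/2`, and `y = (1 - 2α) x + 2α · 1/2`.
-/

open Set Topology

lemma binEnt_eq_binEntropy_div_log_two (p : ℝ) : binEnt p = binEntropy p / log 2 := by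
  simp only [binEnt, binEntropy, logb, log_inv]
  ring

lemma continuous_binEnt : Continuous binEnt := by
  simpa only [← binEnt_eq_binEntropy_div_log_two] using binEntropy_continuous.div_const (log 2)

noncomputable def binEntropyDeriv (p : ℝ) : ℝ := log (1 - p) - log p

lemma binEntropyDeriv_pos {p : ℝ} (hp : p ∈ Ioo (0:ℝ) (1/2)) : 0 < binEntropyDeriv p :=
  sub_pos.2 (log_lt_log hp.1 (by linarith [hp.2]))

lemma hasDerivAt_binEntropyDeriv {p : ℝ} (hp₀ : p ≠ 0) (hp₁ : p ≠ 1) :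
    HasDerivAt binEntropyDeriv (-(p * (1 - p))⁻¹) p := by
  have hq : 1 - p ≠ 0 := sub_ne_zero.2 hp₁.symm
  have h : HasDerivAt (fun q => log (1 - q) - log q) (-1 / (1 - p) - p⁻¹) p := by
    simpa using (((hasDerivAt_id' p).const_sub 1).log hq).fun_sub (hasDerivAt_log hp₀)
  refine h.congr_deriv ?_
  field_simp
  ring

lemma binEntropyDeriv_one_half : binEntropyDeriv (1/2) = 0 := by
  norm_num [binEntropyDeriv]

lemma hasDerivAt_binEnt {p : ℝ} (hp₀ : p ≠ 0) (hp₁ : p ≠ 1) :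
    HasDerivAt binEnt (binEntropyDeriv p / log 2) p := by
  simpa only [← binEnt_eq_binEntropy_div_log_two, binEntropyDeriv] using
    (hasDerivAt_binEntropy hp₀ hp₁).div_const (log 2)

lemma binEnt_strictMonoOn : StrictMonoOn binEnt (Icc 0 (1/2)) := by
  intro p hp q hq hpq
  rw [one_div] at hp hq
  simpa only [binEnt_eq_binEntropy_div_log_two] using
    div_lt_div_of_pos_right (binEntropy_strictMonoOn hp hq hpq) (log_pos one_lt_two)

lemma binEnt_image_Icc : binEnt '' Icc 0 (1/2) = Icc 0 1 := by
  rw [continuous_binEnt.continuousOn.image_Icc_of_monotoneOn (by norm_num)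
    binEnt_strictMonoOn.monotoneOn]
  simp [binEnt_eq_binEntropy_div_log_two, (log_pos one_lt_two).ne']

lemma binEntInv_binEnt {p : ℝ} (hp : p ∈ Icc (0:ℝ) (1/2)) : binEntInv (binEnt p) = p := by
  have hsup : {q | q ∈ Icc (0:ℝ) (1/2) ∧ binEnt p ≤ binEnt q} = Icc p (1/2) := by
    ext q
    constructor
    · rintro ⟨hq, hpq⟩
      exact ⟨(binEnt_strictMonoOn.le_iff_le hp hq).1 hpq, hq.2⟩
    · rintro ⟨hpq, hq⟩
      have hq' : q ∈ Icc (0:ℝ) (1/2) := ⟨hp.1.trans hpq, hq⟩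
      exact ⟨hq', (binEnt_strictMonoOn.le_iff_le hp hq').2 hpq⟩
  rw [binEntInv, hsup, csInf_Icc hp.2]

lemma exists_binEnt_eq {y : ℝ} (hy : y ∈ Icc (0:ℝ) 1) :
    ∃ p ∈ Icc (0:ℝ) (1/2), binEnt p = y := by
  rwa [← binEnt_image_Icc] at hy

lemma binEnt_binEntInv {y : ℝ} (hy : y ∈ Icc (0:ℝ) 1) : binEnt (binEntInv y) = y := by
  obtain ⟨p, hp, rfl⟩ := exists_binEnt_eq hy
  rw [binEntInv_binEnt hp]

lemma binEntInv_mem_Icc {y : ℝ} (hy : y ∈ Icc (0:ℝ) 1) :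
    binEntInv y ∈ Icc (0:ℝ) (1/2) := by
  obtain ⟨p, hp, rfl⟩ := exists_binEnt_eq hy
  rwa [binEntInv_binEnt hp]

lemma binEntInv_strictMonoOn : StrictMonoOn binEntInv (Icc 0 1) := by
  intro y hy z hz hyz
  obtain ⟨p, hp, rfl⟩ := exists_binEnt_eq hy
  obtain ⟨q, hq, rfl⟩ := exists_binEnt_eq hz
  rw [binEntInv_binEnt hp, binEntInv_binEnt hq]
  exact (binEnt_strictMonoOn.lt_iff_lt hp hq).1 hyz

lemma binEntInv_mem_Ioo {t : ℝ} (ht : t ∈ Ioo (0:ℝ) 1) :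
    binEntInv t ∈ Ioo (0:ℝ) (1/2) := by
  have h₀ : binEntInv 0 = 0 := by
    simpa [binEnt_eq_binEntropy_div_log_two] using binEntInv_binEnt (p := 0) (by norm_num)
  have h₁ : binEntInv 1 = 1/2 := by
    simpa [binEnt_eq_binEntropy_div_log_two, (log_pos one_lt_two).ne'] using
      binEntInv_binEnt (p := 1/2) (by norm_num)
  rw [← h₀, ← h₁]
  exact ⟨binEntInv_strictMonoOn (left_mem_Icc.2 zero_le_one) (Ioo_subset_Icc_self ht) ht.1,
    binEntInv_strictMonoOn (Ioo_subset_Icc_self ht) (right_mem_Icc.2 zero_le_one) ht.2⟩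

lemma continuousOn_binEntInv : ContinuousOn binEntInv (Icc 0 1) := by
  let g : Icc (0:ℝ) 1 → Icc (0:ℝ) (1/2) := fun y => ⟨binEntInv y, binEntInv_mem_Icc y.2⟩
  have hg_mono : Monotone g := fun y z h => binEntInv_strictMonoOn.monotoneOn y.2 z.2 h
  have hg_surj : Function.Surjective g := fun p =>
    ⟨⟨binEnt p, binEnt_image_Icc ▸ mem_image_of_mem _ p.2⟩,
      Subtype.ext (binEntInv_binEnt p.2)⟩
  rw [continuousOn_iff_continuous_domRestrict]
  exact continuous_subtype_val.comp (hg_mono.continuous_of_surjective hg_surj)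

lemma hasDerivAt_binEntInv {t : ℝ} (ht : t ∈ Ioo (0:ℝ) 1) :
    HasDerivAt binEntInv (log 2 / binEntropyDeriv (binEntInv t)) t := by
  have hx := binEntInv_mem_Ioo ht
  have hcont : ContinuousAt binEntInv t :=
    continuousOn_binEntInv.continuousAt (Icc_mem_nhds ht.1 ht.2)
  have hinv : ∀ᶠ y in 𝓝 t, binEnt (binEntInv y) = y := by
    filter_upwards [Ioo_mem_nhds ht.1 ht.2] with y hy
    exact binEnt_binEntInv (Ioo_subset_Icc_self hy)
  have hderiv_ne : binEntropyDeriv (binEntInv t) / log 2 ≠ 0 :=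
    (div_pos (binEntropyDeriv_pos hx) (log_pos one_lt_two)).ne'
  exact ((hasDerivAt_binEnt hx.1.ne' (by linarith [hx.2])).of_local_left_inverse hcont
    hderiv_ne hinv).congr_deriv (inv_div _ _)

lemma hasDerivAt_mul_one_sub_mul_binEntropyDeriv {p : ℝ} (hp₀ : p ≠ 0) (hp₁ : p ≠ 1) :
    HasDerivAt (fun q => q * (1 - q) * binEntropyDeriv q)
      ((1 - 2 * p) * binEntropyDeriv p - 1) p := by
  have h := ((hasDerivAt_id' p).fun_mul ((hasDerivAt_id' p).const_sub 1)).fun_mul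
    (hasDerivAt_binEntropyDeriv hp₀ hp₁)
  refine h.congr_deriv ?_
  field_simp [sub_ne_zero.2 hp₁.symm]
  ring

lemma concaveOn_mul_one_sub_mul_binEntropyDeriv :
    ConcaveOn ℝ (Ioc 0 (1/2)) (fun p => p * (1 - p) * binEntropyDeriv p) := by
  have hne {p : ℝ} (hp : p ∈ Ioc (0:ℝ) (1/2)) : p ≠ 0 ∧ p ≠ 1 :=
    ⟨hp.1.ne', by linarith [hp.2]⟩
  have hderiv {p : ℝ} (hp : p ∈ Ioc (0:ℝ) (1/2)) :=
    hasDerivAt_mul_one_sub_mul_binEntropyDeriv (hne hp).1 (hne hp).2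
  have hderiv2 {p : ℝ} (hp : p ∈ Ioc (0:ℝ) (1/2)) :
      HasDerivAt (fun q => (1 - 2 * q) * binEntropyDeriv q - 1)
        (-2 * binEntropyDeriv p - (1 - 2 * p) * (p * (1 - p))⁻¹) p :=
    ((((hasDerivAt_id' p).const_mul 2).const_sub 1).mul
      (hasDerivAt_binEntropyDeriv (hne hp).1 (hne hp).2)).sub_const 1 |>.congr_deriv (by ring)
  refine concaveOn_of_hasDerivWithinAt2_nonpos (convex_Ioc 0 (1/2))
    (f' := fun p => (1 - 2 * p) * binEntropyDeriv p - 1)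
    (f'' := fun p => -2 * binEntropyDeriv p - (1 - 2 * p) * (p * (1 - p))⁻¹)
    (fun p hp => (hderiv hp).continuousAt.continuousWithinAt) ?_ ?_ ?_ <;> rw [interior_Ioc]
  · exact fun p hp => (hderiv (Ioo_subset_Ioc_self hp)).hasDerivWithinAt
  · exact fun p hp => (hderiv2 (Ioo_subset_Ioc_self hp)).hasDerivWithinAt
  · intro p hp
    have hL := binEntropyDeriv_pos hp
    have hq : 0 < p * (1 - p) := mul_pos hp.1 (by linarith [hp.2])
    have : 0 ≤ (1 - 2 * p) * (p * (1 - p))⁻¹ :=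
      mul_nonneg (by linarith [hp.2]) (inv_nonneg.2 hq.le)
    linarith

lemma bConv_eq_add_mul (a x : ℝ) : bConv a x = a + (1 - 2 * a) * x := by
  unfold bConv
  ring

lemma bConv_mem_Ioc {a x : ℝ} (ha : a ∈ Icc (0:ℝ) (1/2)) (hx : x ∈ Ioc (0:ℝ) (1/2)) :
    bConv a x ∈ Ioc (0:ℝ) (1/2) := by
  rw [bConv_eq_add_mul]
  obtain ⟨ha₀, ha₁⟩ := ha
  obtain ⟨hx₀, hx₁⟩ := hx
  constructor <;> nlinarith

lemma mul_le_bConv_mul_one_sub_mul_binEntropyDeriv {a x : ℝ} (ha : a ∈ Icc (0:ℝ) (1/2))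
    (hx : x ∈ Ioc (0:ℝ) (1/2)) :
    (1 - 2 * a) * (x * (1 - x) * binEntropyDeriv x) ≤
      bConv a x * (1 - bConv a x) * binEntropyDeriv (bConv a x) := by
  have h := concaveOn_mul_one_sub_mul_binEntropyDeriv.2 hx (right_mem_Ioc.2 (by norm_num))
    (by linarith [ha.2] : 0 ≤ 1 - 2 * a) (by linarith [ha.1] : 0 ≤ 2 * a) (by ring)
  have hcomb : (1 - 2 * a) • x + (2 * a) • (1/2 : ℝ) = bConv a x := by
    rw [bConv_eq_add_mul, smul_eq_mul, smul_eq_mul]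
    ring
  rw [hcomb] at h
  simpa only [smul_eq_mul, binEntropyDeriv_one_half, mul_zero, add_zero] using h

lemma continuous_bConv (a : ℝ) : Continuous (bConv a) := by
  unfold bConv
  fun_prop

lemma hasDerivAt_bConv (a x : ℝ) : HasDerivAt (bConv a) (1 - 2 * a) x := by
  rw [funext (bConv_eq_add_mul a)]
  simpa using ((hasDerivAt_id' x).const_mul (1 - 2 * a)).const_add a

/-- The derivative of `t ↦ h (a * h⁻¹ t)` at `t = h x`. -/
noncomputable def mglDeriv (a x : ℝ) : ℝ :=
  (1 - 2 * a) * binEntropyDeriv (bConv a x) / binEntropyDeriv x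

lemma hasDerivAt_mglDeriv {a x : ℝ} (ha : a ∈ Icc (0:ℝ) (1/2))
    (hx : x ∈ Ioo (0:ℝ) (1/2)) :
    HasDerivAt (mglDeriv a)
      ((1 - 2 * a) * (bConv a x * (1 - bConv a x) * binEntropyDeriv (bConv a x) -
          (1 - 2 * a) * (x * (1 - x) * binEntropyDeriv x)) /
        (x * (1 - x) * (bConv a x * (1 - bConv a x)) * binEntropyDeriv x ^ 2)) x := by
  have hy := bConv_mem_Ioc ha (Ioo_subset_Ioc_self hx)
  have hy₁ : 1 - bConv a x ≠ 0 := by linarith [hy.2]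
  have hx₁ : 1 - x ≠ 0 := by linarith [hx.2]
  have hL := (binEntropyDeriv_pos hx).ne'
  have h := (((hasDerivAt_binEntropyDeriv hy.1.ne' (by linarith [hy.2])).comp x
    (hasDerivAt_bConv a x)).const_mul (1 - 2 * a)).div
    (hasDerivAt_binEntropyDeriv hx.1.ne' (by linarith [hx.2])) hL
  refine h.congr_deriv ?_
  simp only [Function.comp_apply]
  field_simp [hy.1.ne', hx.1.ne']
  ring

lemma monotoneOn_mglDeriv {a : ℝ} (ha : a ∈ Icc (0:ℝ) (1/2)) :
    MonotoneOn (mglDeriv a) (Ioo 0 (1/2)) := by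
  refine monotoneOn_of_deriv_nonneg (convex_Ioo 0 (1/2))
    (fun x hx => (hasDerivAt_mglDeriv ha hx).continuousAt.continuousWithinAt)
    (fun x hx => ?_) (fun x hx => ?_) <;> rw [interior_Ioo] at hx
  · exact (hasDerivAt_mglDeriv ha hx).differentiableAt.differentiableWithinAt
  · rw [(hasDerivAt_mglDeriv ha hx).deriv]
    have hy := bConv_mem_Ioc ha (Ioo_subset_Ioc_self hx)
    have hx₁ : 0 < 1 - x := by linarith [hx.2]
    have hy₁ : 0 < 1 - bConv a x := by linarith [hy.2]
    exact div_nonneg (mul_nonneg (by linarith [ha.2]) (sub_nonneg.2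
      (mul_le_bConv_mul_one_sub_mul_binEntropyDeriv ha (Ioo_subset_Ioc_self hx))))
      (mul_nonneg (mul_pos (mul_pos hx.1 hx₁) (mul_pos hy.1 hy₁)).le (sq_nonneg _))

lemma hasDerivAt_binEnt_bConv_binEntInv {a t : ℝ} (ha : a ∈ Icc (0:ℝ) (1/2))
    (ht : t ∈ Ioo (0:ℝ) 1) :
    HasDerivAt (fun t => binEnt (bConv a (binEntInv t))) (mglDeriv a (binEntInv t)) t := by
  have hx := binEntInv_mem_Ioo ht
  have hy := bConv_mem_Ioc ha (Ioo_subset_Ioc_self hx)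
  have h := (hasDerivAt_binEnt hy.1.ne' (by linarith [hy.2])).comp t
    ((hasDerivAt_bConv a _).comp t (hasDerivAt_binEntInv ht))
  refine h.congr_deriv ?_
  rw [mglDeriv]
  field_simp [(log_pos one_lt_two).ne', (binEntropyDeriv_pos hx).ne']

/-- For every fixed `α ∈ (0,1/2)`, the Mrs. Gerber's Lemma function
`φ(t) = h(α * h⁻¹(t))` is convex on `[0,1]`. -/
theorem mgl_function_convex (a : ℝ) (ha : a ∈ Set.Ioo (0:ℝ) (1/2)) :
    ConvexOn ℝ (Set.Icc (0:ℝ) 1) (fun t => binEnt (bConv a (binEntInv t))) := by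
  have ha' := Ioo_subset_Icc_self ha
  have hφ' := fun t (ht : t ∈ Ioo (0:ℝ) 1) => hasDerivAt_binEnt_bConv_binEntInv ha' ht
  refine MonotoneOn.convexOn_of_deriv (convex_Icc 0 1) ?_ ?_ ?_
  · exact continuous_binEnt.comp_continuousOn
      ((continuous_bConv a).comp_continuousOn continuousOn_binEntInv)
  · rw [interior_Icc]
    exact fun t ht => (hφ' t ht).differentiableAt.differentiableWithinAt
  · rw [interior_Icc]
    intro s hs t ht hst
    rw [(hφ' s hs).deriv, (hφ' t ht).deriv]
    exact monotoneOn_mglDeriv ha' (binEntInv_mem_Ioo hs) (binEntInv_mem_Ioo ht)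
      (binEntInv_strictMonoOn.monotoneOn (Ioo_subset_Icc_self hs) (Ioo_subset_Icc_self ht) hst)
end
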